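/- arXiv:1807.07851 — 10 statements merged into one kernel-verified Lean document; each statement's English description precedes it below -/
import Mathlib

section
/- Let R be a commutative ring and a, b ⊆ R ideals. Then Γ̄_a(M) ⊆ Γ̄_b(M) for every R-module M if and only if b ⊆ √a. -/
/-- The small `a`-torsion submodule: elements killed by some power of `a`. -/
def smallTorsion {R : Type*} [CommRing R] (a : Ideal R) (M : Type*) [AddCommGroup M]
    [Module R M] : Submodule R M where
  carrier := {x | ∃ n : ℕ, ∀ r ∈ a ^ n, r • x = 0}
  zero_mem' := ⟨0, fun r _ => smul_zero r⟩
  add_mem' := by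
    rintro x y ⟨m, hm⟩ ⟨n, hn⟩
    refine ⟨m + n, fun r hr => ?_⟩
    have h1 : r ∈ a ^ m := Ideal.pow_le_pow_right (Nat.le_add_right m n) hr
    have h2 : r ∈ a ^ n := Ideal.pow_le_pow_right (Nat.le_add_left n m) hr
    rw [smul_add, hm r h1, hn r h2, add_zero]
  smul_mem' := by
    rintro c x ⟨n, hn⟩
    refine ⟨n, fun r hr => ?_⟩
    rw [smul_smul, mul_comm, ← smul_smul, hn r hr, smul_zero]

/-- The large `a`-torsion submodule: elements killed by a power of each element of `a`. -/
def largeTorsion {R : Type*} [CommRing R] (a : Ideal R) (M : Type*) [AddCommGroup M]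
    [Module R M] : Submodule R M where
  carrier := {x | ∀ r ∈ a, ∃ n : ℕ, r ^ n • x = 0}
  zero_mem' := fun r _ => ⟨1, smul_zero _⟩
  add_mem' := by
    rintro x y hx hy r hr
    obtain ⟨m, hm⟩ := hx r hr
    obtain ⟨n, hn⟩ := hy r hr
    refine ⟨m + n, ?_⟩
    have hx0 : r ^ (m + n) • x = 0 := by rw [pow_add, mul_comm, mul_smul, hm, smul_zero]
    have hy0 : r ^ (m + n) • y = 0 := by rw [pow_add, mul_smul, hn, smul_zero]
    rw [smul_add, hx0, hy0, add_zero]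
  smul_mem' := by
    intro c x hx r hr
    obtain ⟨n, hn⟩ := hx r hr
    exact ⟨n, by rw [smul_smul, mul_comm, ← smul_smul, hn, smul_zero]⟩

/-- The weak assassin of `M`: primes minimal over the annihilator of some element. -/
def weakAssassin (R : Type*) [CommRing R] (M : Type*) [AddCommGroup M] [Module R M] :
    Set (Ideal R) :=
  {p | ∃ x : M, p ∈ (Ideal.torsionOf R M x).minimalPrimes}

universe u

section LargeTorsion

variable {R : Type*} [CommRing R]

theorem largeTorsion_le_of_le_radical {a b : Ideal R} (hba : b ≤ a.radical) (M : Type*)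
    [AddCommGroup M] [Module R M] : largeTorsion a M ≤ largeTorsion b M := by
  intro x hx r hr
  obtain ⟨k, hk⟩ := hba hr
  obtain ⟨n, hn⟩ := hx (r ^ k) hk
  exact ⟨k * n, by rwa [pow_mul]⟩

theorem largeTorsion_quotient_eq_top (a : Ideal R) : largeTorsion a (R ⧸ a) = ⊤ := by
  refine eq_top_iff.mpr fun x _ r hr => ⟨1, ?_⟩
  rw [pow_one, Algebra.smul_def, Ideal.Quotient.algebraMap_eq,
    Ideal.Quotient.eq_zero_iff_mem.mpr hr, zero_mul]

theorem one_mem_largeTorsion_quotient_iff (a b : Ideal R) :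
    (1 : R ⧸ a) ∈ largeTorsion b (R ⧸ a) ↔ b ≤ a.radical := by
  simp only [largeTorsion, Submodule.mem_mk, AddSubmonoid.mem_mk, AddSubsemigroup.mem_mk,
    Set.mem_ofPred_eq, ← Algebra.algebraMap_eq_smul_one, Ideal.Quotient.algebraMap_eq,
    Ideal.Quotient.eq_zero_iff_mem]
  rfl

end LargeTorsion

/-- `Γ̄_a(M) ⊆ Γ̄_b(M)` for every `R`-module `M` iff `b ⊆ √a`. -/
theorem stmt1 (R : Type u) [CommRing R] (a b : Ideal R) :
    (∀ (M : Type u) [AddCommGroup M] [Module R M], largeTorsion a M ≤ largeTorsion b M) ↔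
      b ≤ a.radical := by
  refine ⟨fun h => ?_, fun hba M _ _ => largeTorsion_le_of_le_radical hba M⟩
  rw [← one_mem_largeTorsion_quotient_iff]
  exact h (R ⧸ a) (by simp [largeTorsion_quotient_eq_top])
end

section
/- Let R be a commutative ring and a ⊆ R an ideal. Then Γ̄_a(M) = M for every R-module M if and only if a is nil, i.e. every element of a is nilpotent. -/
universe u

section LargeTorsion

variable {R : Type*} [CommRing R] {a : Ideal R}

theorem largeTorsion_eq_top_of_isNilpotent (M : Type*) [AddCommGroup M] [Module R M]
    (h : ∀ r ∈ a, IsNilpotent r) : largeTorsion a M = ⊤ := by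
  refine eq_top_iff.mpr fun x _ r hr => ?_
  obtain ⟨n, hn⟩ := h r hr
  exact ⟨n, by rw [hn, zero_smul]⟩

theorem isNilpotent_of_largeTorsion_self_eq_top (h : largeTorsion a R = ⊤) :
    ∀ r ∈ a, IsNilpotent r := by
  intro r hr
  have one_mem : (1 : R) ∈ largeTorsion a R := h ▸ Submodule.mem_top
  obtain ⟨n, hn⟩ := one_mem r hr
  exact ⟨n, by simpa using hn⟩

end LargeTorsion

/-- `Γ̄_a(M) = M` for every `R`-module `M` iff `a` is nil. -/
theorem stmt4 (R : Type u) [CommRing R] (a : Ideal R) :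
    (∀ (M : Type u) [AddCommGroup M] [Module R M], largeTorsion a M = ⊤) ↔
      ∀ r ∈ a, IsNilpotent r :=
  ⟨fun h => isNilpotent_of_largeTorsion_self_eq_top (h R),
    fun h M _ _ => largeTorsion_eq_top_of_isNilpotent M h⟩
end

section
/- Let R be a commutative ring, a ⊆ R an ideal, and M an R-module. Then: (1) if Γ_a(M) = M then Assᶠ_R(M) ⊆ V(a); and (2) Assᶠ_R(M) ⊆ V(a) if and only if Γ̄_a(M) = M. -/
/-! An element `x` lies in `Γ̄_a(M)` exactly when `a ⊆ √(0 :_R x)`, and the radical of an ideal is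
the intersection of the primes minimal over it. Hence `Γ̄_a(M) = M` says that `a` lies in every
prime minimal over an annihilator, i.e. `Assᶠ_R(M) ⊆ V(a)`. Part (1) follows since
`Γ_a(M) ⊆ Γ̄_a(M)`. -/

theorem Ideal.le_radical_iff_forall_mem_minimalPrimes {R : Type*} [CommRing R] {I J : Ideal R} :
    J ≤ I.radical ↔ ∀ p ∈ I.minimalPrimes, J ≤ p := by
  rw [← Ideal.sInf_minimalPrimes, le_sInf_iff]

section Torsion

variable {R : Type*} [CommRing R] {a : Ideal R} {M : Type*} [AddCommGroup M] [Module R M]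

theorem mem_largeTorsion_iff_le_radical_torsionOf {x : M} :
    x ∈ largeTorsion a M ↔ a ≤ (Ideal.torsionOf R M x).radical :=
  forall₂_congr fun _ _ => by simp only [Ideal.mem_radical_iff, Ideal.mem_torsionOf_iff]

theorem smallTorsion_le_largeTorsion : smallTorsion a M ≤ largeTorsion a M :=
  fun _ ⟨n, hn⟩ _ hr => ⟨n, hn _ (Ideal.pow_mem_pow hr n)⟩

theorem weakAssassin_subset_iff_largeTorsion_eq_top :
    weakAssassin R M ⊆ {p : Ideal R | p.IsPrime ∧ a ≤ p} ↔ largeTorsion a M = ⊤ := by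
  simp only [Submodule.eq_top_iff', mem_largeTorsion_iff_le_radical_torsionOf,
    Ideal.le_radical_iff_forall_mem_minimalPrimes]
  exact ⟨fun h x p hp => (h ⟨x, hp⟩).2, fun h p ⟨x, hp⟩ => ⟨hp.1.1, h x p hp⟩⟩

end Torsion

/-- (1) if `Γ_a(M) = M` then `Assᶠ_R(M) ⊆ V(a)`; and
(2) `Assᶠ_R(M) ⊆ V(a)` iff `Γ̄_a(M) = M`. -/
theorem stmt5 (R : Type*) [CommRing R] (a : Ideal R)
    (M : Type*) [AddCommGroup M] [Module R M] :
    (smallTorsion a M = ⊤ → weakAssassin R M ⊆ {p : Ideal R | p.IsPrime ∧ a ≤ p}) ∧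
    (weakAssassin R M ⊆ {p : Ideal R | p.IsPrime ∧ a ≤ p} ↔ largeTorsion a M = ⊤) :=
  ⟨fun h => weakAssassin_subset_iff_largeTorsion_eq_top.2 <|
      top_le_iff.1 (h ▸ smallTorsion_le_largeTorsion),
    weakAssassin_subset_iff_largeTorsion_eq_top⟩
end

section
/- Let R be a commutative ring and let a ⊆ R be an ideal generated by a set of idempotent elements. Then a is half-centred: for every R-module M, Γ_a(M) = M if and only if Assᶠ_R(M) ⊆ V(a). -/
/-!
Every prime of the weak assassin contains a power of `a`, hence `a`, as soon as every element is
`a`-torsion. Conversely, for an idempotent generator `e` and `x ∈ M`, the element `1 - e` kills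
`e • x`; so if `e • x ≠ 0`, a prime minimal over the annihilator of `e • x` contains `1 - e` and
therefore misses `e`. Hence if the weak assassin lies in `V(a)`, every generator kills every `x`.
-/

section

variable {R : Type*} [CommRing R] {M : Type*} [AddCommGroup M] [Module R M]

theorem isPrime_of_mem_weakAssassin {p : Ideal R} (hp : p ∈ weakAssassin R M) : p.IsPrime :=
  hp.elim fun _ hx => hx.1.1

theorem mem_smallTorsion_iff {a : Ideal R} {x : M} :
    x ∈ smallTorsion a M ↔ ∃ n : ℕ, a ^ n ≤ Ideal.torsionOf R M x :=
  Iff.rfl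

theorem exists_mem_weakAssassin_torsionOf_le {y : M} (hy : y ≠ 0) :
    ∃ p ∈ weakAssassin R M, Ideal.torsionOf R M y ≤ p := by
  have hne : Ideal.torsionOf R M y ≠ ⊤ := (Ideal.torsionOf_eq_top_iff (R := R) y).not.mpr hy
  obtain ⟨p, hp⟩ := Ideal.nonempty_minimalPrimes hne
  exact ⟨p, ⟨y, hp⟩, hp.1.2⟩

theorem le_of_mem_weakAssassin_of_smallTorsion_eq_top {a : Ideal R}
    (htop : smallTorsion a M = ⊤) {p : Ideal R} (hp : p ∈ weakAssassin R M) :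
    p.IsPrime ∧ a ≤ p := by
  have := isPrime_of_mem_weakAssassin hp
  obtain ⟨x, hx⟩ := hp
  obtain ⟨n, hn⟩ := mem_smallTorsion_iff.mp (htop ▸ Submodule.mem_top : x ∈ smallTorsion a M)
  exact ⟨this, Ideal.IsPrime.le_of_pow_le (hn.trans hx.1.2)⟩

theorem IsIdempotentElem.one_sub_mem_torsionOf_smul {e : R} (he : IsIdempotentElem e) (x : M) :
    1 - e ∈ Ideal.torsionOf R M (e • x) := by
  rw [Ideal.mem_torsionOf_iff, sub_smul, one_smul, smul_smul, he.eq, sub_self]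

theorem IsIdempotentElem.smul_eq_zero_of_forall_mem_weakAssassin {e : R}
    (he : IsIdempotentElem e) (hass : ∀ p ∈ weakAssassin R M, e ∈ p) (x : M) : e • x = 0 := by
  by_contra hne
  obtain ⟨p, hp, hle⟩ := exists_mem_weakAssassin_torsionOf_le (R := R) hne
  have hunit : (1 - e) + e ∈ p := p.add_mem (hle (he.one_sub_mem_torsionOf_smul x)) (hass p hp)
  exact (isPrime_of_mem_weakAssassin hp).ne_top ((Ideal.eq_top_iff_one p).mpr (by rwa [sub_add_cancel] at hunit))

end

/-- an ideal generated by idempotents is half-centred. -/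
theorem stmt6 (R : Type*) [CommRing R] (a : Ideal R)
    (hgen : ∃ E : Set R, (∀ e ∈ E, IsIdempotentElem e) ∧ a = Ideal.span E)
    (M : Type*) [AddCommGroup M] [Module R M] :
    smallTorsion a M = ⊤ ↔ weakAssassin R M ⊆ {p : Ideal R | p.IsPrime ∧ a ≤ p} := by
  obtain ⟨E, hE, rfl⟩ := hgen
  refine ⟨fun htop _ hp => le_of_mem_weakAssassin_of_smallTorsion_eq_top htop hp, fun hass => ?_⟩
  refine eq_top_iff.mpr fun x _ => mem_smallTorsion_iff.mpr ⟨1, ?_⟩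
  rw [pow_one, Ideal.span_le]
  exact fun e he => (hE e he).smul_eq_zero_of_forall_mem_weakAssassin
    (fun p hp => (hass hp).2 (Ideal.subset_span he)) x
end

section
/- Let R be a commutative ring and a ⊆ R an ideal. The functor Γ̄_a is a radical: for every R-module M, the large a-torsion submodule of the quotient M/Γ̄_a(M) is zero, i.e. Γ̄_a(M/Γ̄_a(M)) = 0. -/
section LargeTorsion

variable {R : Type*} [CommRing R] {a : Ideal R} {M : Type*} [AddCommGroup M] [Module R M]

theorem mk_mem_largeTorsion_quotient_iff {N : Submodule R M} {x : M} :
    Submodule.Quotient.mk (p := N) x ∈ largeTorsion a (M ⧸ N) ↔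
      ∀ r ∈ a, ∃ n : ℕ, r ^ n • x ∈ N := by
  simp only [largeTorsion, Submodule.mem_mk, AddSubmonoid.mem_mk, AddSubsemigroup.mem_mk,
    Set.mem_ofPred_eq, ← Submodule.Quotient.mk_smul, Submodule.Quotient.mk_eq_zero]

theorem mem_largeTorsion_of_forall_pow_smul_mem {x : M}
    (h : ∀ r ∈ a, ∃ n : ℕ, r ^ n • x ∈ largeTorsion a M) : x ∈ largeTorsion a M := by
  intro r hr
  obtain ⟨n, hn⟩ := h r hr
  obtain ⟨m, hm⟩ := hn r hr
  exact ⟨m + n, by rwa [pow_add, mul_smul]⟩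

end LargeTorsion

/-- `Γ̄_a` is a radical: `Γ̄_a(M / Γ̄_a(M)) = 0`. -/
theorem stmt9 (R : Type*) [CommRing R] (a : Ideal R)
    (M : Type*) [AddCommGroup M] [Module R M] :
    largeTorsion a (M ⧸ largeTorsion a M) = ⊥ := by
  rw [eq_bot_iff]
  rintro x hx
  obtain ⟨y, rfl⟩ := Submodule.Quotient.mk_surjective _ x
  rw [Submodule.mem_bot, Submodule.Quotient.mk_eq_zero]
  exact mem_largeTorsion_of_forall_pow_smul_mem (mk_mem_largeTorsion_quotient_iff.1 hx)
end

section
/- Let R be a commutative ring, a ⊆ R an ideal, and b ⊆ R an ideal such that the image of a in R/b is contained in Γ_a(R/b) (regarding R/b as an R-module) and Γ_a(R/b) ≠ R/b. Then Γ_a((R/b)/Γ_a(R/b)) ≠ 0. -/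
/-! The class of `1` in `(R/b)/Γ_a(R/b)` is killed by `a`, because `a(R/b) ⊆ Γ_a(R/b)`. It is
nonzero, since an `R`-submodule of the cyclic module `R/b` containing `1` is everything. -/

theorem Submodule.mkQ_mem_smallTorsion_of_smul_mem {R M : Type*} [CommRing R] [AddCommGroup M]
    [Module R M] (a : Ideal R) {N : Submodule R M} {x : M} (hx : ∀ r ∈ a, r • x ∈ N) :
    N.mkQ x ∈ smallTorsion a (M ⧸ N) :=
  ⟨1, fun r hr => by
    rw [← map_smul, Submodule.mkQ_apply, Submodule.Quotient.mk_eq_zero]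
    exact hx r (by simpa using hr)⟩

theorem Ideal.Quotient.submodule_eq_top_of_one_mem {R : Type*} [CommRing R] {b : Ideal R}
    (N : Submodule R (R ⧸ b)) (h : (1 : R ⧸ b) ∈ N) : N = ⊤ := by
  rw [eq_top_iff]
  rintro x -
  obtain ⟨r, rfl⟩ := Ideal.Quotient.mk_surjective x
  simpa [Algebra.smul_def] using N.smul_mem r h

/-- if the image of `a` in `R/b` is contained in `Γ_a(R/b) ≠ R/b`, then
`Γ_a((R/b)/Γ_a(R/b)) ≠ 0`. -/
theorem stmt11 (R : Type*) [CommRing R] (a b : Ideal R)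
    (h1 : Submodule.map b.mkQ a ≤ smallTorsion a (R ⧸ b))
    (h2 : smallTorsion a (R ⧸ b) ≠ ⊤) :
    smallTorsion a ((R ⧸ b) ⧸ smallTorsion a (R ⧸ b)) ≠ ⊥ := by
  set G := smallTorsion a (R ⧸ b)
  have hone : G.mkQ 1 ∈ smallTorsion a ((R ⧸ b) ⧸ G) :=
    Submodule.mkQ_mem_smallTorsion_of_smul_mem a fun r hr => by
      simpa [Algebra.smul_def] using h1 ⟨r, hr, rfl⟩
  intro hbot
  refine h2 (Ideal.Quotient.submodule_eq_top_of_one_mem G ?_)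
  rwa [hbot, Submodule.mem_bot, Submodule.mkQ_apply, Submodule.Quotient.mk_eq_zero] at hone
end

section
/- Let R be a commutative ring and a ⊆ R an ideal, and let 0 → N → M → P → 0 be a short exact sequence of R-modules. Then Γ̄_a(M) = M if and only if Γ̄_a(N) = N and Γ̄_a(P) = P. In particular, the class of R-modules M with Γ̄_a(M) = M is a Serre class. -/
/-! The key point is that the large torsion condition is checked one element `r ∈ a` at a time:
if `r ^ n` kills `g x` then `r ^ n • x` lies in `ker g`, where some further power `r ^ m` kills it,
so `r ^ (m + n)` kills `x`. -/

section LargeTorsion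

variable {R : Type*} [CommRing R] {a : Ideal R} {N M P : Type*}
  [AddCommGroup N] [Module R N] [AddCommGroup M] [Module R M] [AddCommGroup P] [Module R P]

theorem map_mem_largeTorsion (g : M →ₗ[R] P) {x : M} (hx : x ∈ largeTorsion a M) :
    g x ∈ largeTorsion a P := fun r hr => by
  obtain ⟨n, hn⟩ := hx r hr
  exact ⟨n, by rw [← map_smul, hn, map_zero]⟩

theorem mem_largeTorsion_of_injective {f : N →ₗ[R] M} (hf : Function.Injective f) {x : N}
    (hx : f x ∈ largeTorsion a M) : x ∈ largeTorsion a N := fun r hr => by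
  obtain ⟨n, hn⟩ := hx r hr
  exact ⟨n, hf (by rw [map_smul, hn, map_zero])⟩

theorem mem_largeTorsion_of_ker_le {g : M →ₗ[R] P} (hker : LinearMap.ker g ≤ largeTorsion a M)
    {x : M} (hx : g x ∈ largeTorsion a P) : x ∈ largeTorsion a M := fun r hr => by
  obtain ⟨n, hn⟩ := hx r hr
  have hker_mem : r ^ n • x ∈ LinearMap.ker g := by rw [LinearMap.mem_ker, map_smul, hn]
  obtain ⟨m, hm⟩ := hker hker_mem r hr
  exact ⟨m + n, by rw [pow_add, mul_smul, hm]⟩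

theorem largeTorsion_eq_top_of_injective {f : N →ₗ[R] M} (hf : Function.Injective f)
    (hM : largeTorsion a M = ⊤) : largeTorsion a N = ⊤ :=
  eq_top_iff.2 fun _ _ => mem_largeTorsion_of_injective hf (hM ▸ Submodule.mem_top)

theorem largeTorsion_eq_top_of_surjective {g : M →ₗ[R] P} (hg : Function.Surjective g)
    (hM : largeTorsion a M = ⊤) : largeTorsion a P = ⊤ :=
  eq_top_iff.2 fun y _ => by
    obtain ⟨x, rfl⟩ := hg y
    exact map_mem_largeTorsion g (hM ▸ Submodule.mem_top)

theorem largeTorsion_eq_top_of_exact {f : N →ₗ[R] M} {g : M →ₗ[R] P}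
    (hfg : Function.Exact f g) (hN : largeTorsion a N = ⊤) (hP : largeTorsion a P = ⊤) :
    largeTorsion a M = ⊤ := by
  have hker : LinearMap.ker g ≤ largeTorsion a M := by
    rw [hfg.linearMap_ker_eq]
    rintro _ ⟨y, rfl⟩
    exact map_mem_largeTorsion f (hN ▸ Submodule.mem_top)
  exact eq_top_iff.2 fun _ _ => mem_largeTorsion_of_ker_le hker (hP ▸ Submodule.mem_top)

end LargeTorsion

/-- for a short exact sequence `0 → N → M → P → 0`, `Γ̄_a(M) = M` iff
`Γ̄_a(N) = N` and `Γ̄_a(P) = P`; together with `Γ̄_a(0) = 0` this says the class of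
large `a`-torsion modules is a Serre class. -/
theorem stmt12 (R : Type*) [CommRing R] (a : Ideal R)
    (N M P : Type*) [AddCommGroup N] [Module R N] [AddCommGroup M] [Module R M]
    [AddCommGroup P] [Module R P]
    (f : N →ₗ[R] M) (g : M →ₗ[R] P)
    (hf : Function.Injective f) (hg : Function.Surjective g) (hfg : Function.Exact f g) :
    largeTorsion a M = ⊤ ↔ (largeTorsion a N = ⊤ ∧ largeTorsion a P = ⊤) :=
  ⟨fun hM => ⟨largeTorsion_eq_top_of_injective hf hM, largeTorsion_eq_top_of_surjective hg hM⟩,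
    fun ⟨hN, hP⟩ => largeTorsion_eq_top_of_exact hfg hN hP⟩
end

section
/- Let R be a commutative ring and let a ⊆ R be an ideal generated by a set of idempotent elements. Then every R-module M is of strongly bounded large a-torsion; in fact a·M ∩ Γ̄_a(M) = 0. -/
/-!
If `f ∈ a` fixes `x`, then so does every power of `f`, so `x` cannot be killed by a power of
`f` unless `x = 0`. Hence the large `a`-torsion meets the elements fixed by some element of `a`
trivially. These fixed elements form a submodule (if `f, g ∈ a` fix `x, y`, then
`f + g - f * g ∈ a` fixes `x + y`), and when `a` is generated by idempotents it contains
`a • M`, since each generator `e • m` is fixed by `e`.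
-/

section FixedByIdeal

variable {R : Type*} [CommRing R] (a : Ideal R) (M : Type*) [AddCommGroup M] [Module R M]

def fixedByIdeal : Submodule R M where
  carrier := {x | ∃ f ∈ a, f • x = x}
  zero_mem' := ⟨0, a.zero_mem, smul_zero 0⟩
  add_mem' := by
    rintro x y ⟨f, hf, hfx⟩ ⟨g, hg, hgy⟩
    refine ⟨f + g - f * g, a.sub_mem (a.add_mem hf hg) (a.mul_mem_right g hf), ?_⟩
    simp only [sub_smul, add_smul, smul_add, mul_smul, hfx, hgy, smul_comm f g]
    abel
  smul_mem' := by
    rintro c x ⟨f, hf, hfx⟩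
    exact ⟨f, hf, by rw [smul_comm, hfx]⟩

variable {a M}

theorem pow_smul_eq_self_of_smul_eq_self {f : R} {x : M} (h : f • x = x) (n : ℕ) :
    f ^ n • x = x := by
  induction n with
  | zero => rw [pow_zero, one_smul]
  | succ n ih => rw [pow_succ, mul_smul, h, ih]

theorem fixedByIdeal_inf_largeTorsion : fixedByIdeal a M ⊓ largeTorsion a M = ⊥ := by
  refine eq_bot_iff.2 fun x ⟨⟨f, hf, hfx⟩, hx⟩ => ?_
  obtain ⟨n, hn⟩ := hx f hf
  rwa [pow_smul_eq_self_of_smul_eq_self hfx n] at hn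

theorem smul_top_le_fixedByIdeal (h : a ≤ fixedByIdeal a R) :
    a • (⊤ : Submodule R M) ≤ fixedByIdeal a M :=
  Submodule.smul_le.2 fun r hr m _ => by
    obtain ⟨f, hf, hfr⟩ := h hr
    exact ⟨f, hf, by rw [smul_smul, ← smul_eq_mul, hfr]⟩

theorem span_le_fixedByIdeal_span {E : Set R} (hE : ∀ e ∈ E, IsIdempotentElem e) :
    Ideal.span E ≤ fixedByIdeal (Ideal.span E) R :=
  Ideal.span_le.2 fun e he => ⟨e, Ideal.subset_span he, hE e he⟩

end FixedByIdeal

/-- if `a` is generated by idempotents, then every `R`-module is of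
strongly bounded large `a`-torsion; in fact `a·M ∩ Γ̄_a(M) = 0`. -/
theorem stmt15 (R : Type*) [CommRing R] (a : Ideal R)
    (hgen : ∃ E : Set R, (∀ e ∈ E, IsIdempotentElem e) ∧ a = Ideal.span E)
    (M : Type*) [AddCommGroup M] [Module R M] :
    (∃ n : ℕ, a ^ n • (⊤ : Submodule R M) ⊓ largeTorsion a M = ⊥) ∧
    a • (⊤ : Submodule R M) ⊓ largeTorsion a M = ⊥ := by
  obtain ⟨E, hE, rfl⟩ := hgen
  have hfixed : Ideal.span E • (⊤ : Submodule R M) ≤ fixedByIdeal (Ideal.span E) M :=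
    smul_top_le_fixedByIdeal (span_le_fixedByIdeal_span hE)
  have hbot : Ideal.span E • (⊤ : Submodule R M) ⊓ largeTorsion (Ideal.span E) M = ⊥ :=
    eq_bot_iff.2 <| (inf_le_inf_right _ hfixed).trans fixedByIdeal_inf_largeTorsion.le
  exact ⟨⟨1, by rwa [pow_one]⟩, hbot⟩
end

section
/- Let R be a commutative ring, a ⊆ R an ideal such that a^n is finitely generated for some n ≥ 1, and let S be a commutative R-algebra that is flat as an R-module. Then for every R-module M, the small aS-torsion submodule Γ_{aS}(S ⊗_R M) of the S-module S ⊗_R M equals the S-submodule of S ⊗_R M generated by the elements 1 ⊗ m with m ∈ Γ_a(M); equivalently, the canonical map S ⊗_R Γ_a(M) → Γ_{aS}(S ⊗_R M) is an isomorphism. -/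
open TensorProduct Submodule

/-! The small torsion `Γ_a(M)` is the union of the torsion submodules of `M` by the finitely
generated ideals `a ^ (n * k)`. For a finitely generated ideal `I = (t₁, …, tᵣ)`, the `I`-torsion
of `M` is the kernel of `M → Mʳ, m ↦ (tᵢ • m)ᵢ`, and flat base change commutes with kernels and
finite products. -/

section BaseChange

variable {R S M N : Type*} [CommRing R] [CommRing S] [Algebra R S]
  [AddCommGroup M] [Module R M] [AddCommGroup N] [Module R N]

lemma Submodule.span_one_tmul_eq_baseChange (p : Submodule R M) :
    span S ((fun m : M => (1 : S) ⊗ₜ[R] m) '' (p : Set M)) = p.baseChange S := by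
  rw [baseChange_eq_span, map_coe]
  rfl

lemma Submodule.torsionBySet_eq_ker_pi (s : Set R) :
    torsionBySet R M s = LinearMap.ker (LinearMap.pi fun t : s => (t : R) • LinearMap.id) := by
  ext x
  simp [mem_torsionBySet_iff, funext_iff]

lemma TensorProduct.piRight_baseChange_pi {ι : Type*} [Fintype ι] [DecidableEq ι]
    (g : ι → M →ₗ[R] N) (x : S ⊗[R] M) :
    piRight R S S (fun _ => N) ((LinearMap.pi g).baseChange S x) =
      fun i => (g i).baseChange S x := by
  induction x using TensorProduct.induction_on with
  | zero => simp only [map_zero]; rfl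
  | tmul s m => ext i; simp
  | add x y hx hy => simp only [map_add, hx, hy]; rfl

lemma Submodule.baseChange_torsionBySet_le (s : Set R) :
    (torsionBySet R M s).baseChange S ≤ torsionBySet S (S ⊗[R] M) (algebraMap R S '' s) := by
  rw [← span_one_tmul_eq_baseChange, span_le]
  rintro _ ⟨m, hm, rfl⟩
  rw [SetLike.mem_coe, mem_torsionBySet_iff]
  rintro ⟨_, t, ht, rfl⟩
  rw [algebraMap_smul, ← tmul_smul, (mem_torsionBySet_iff s m).1 hm ⟨t, ht⟩, tmul_zero]

namespace Module.Flat

variable [Module.Flat R S]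

lemma ker_baseChange (f : M →ₗ[R] N) :
    LinearMap.ker (f.baseChange S) = (LinearMap.ker f).baseChange S := by
  ext x
  rw [LinearMap.mem_ker, LinearMap.baseChange_eq_ltensor,
    lTensor_exact S (LinearMap.exact_subtype_ker_map f) x]
  rfl

lemma baseChange_torsionBySet {s : Set R} (hs : s.Finite) :
    (torsionBySet R M s).baseChange S = torsionBySet S (S ⊗[R] M) (algebraMap R S '' s) := by
  refine le_antisymm (baseChange_torsionBySet_le s) fun x hx => ?_
  have := hs.fintype
  classical
  rw [torsionBySet_eq_ker_pi, ← ker_baseChange, LinearMap.mem_ker,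
    ← (piRight R S S _).map_eq_zero_iff, piRight_baseChange_pi]
  ext t
  rw [LinearMap.baseChange_smul, LinearMap.baseChange_id, LinearMap.smul_apply, LinearMap.id_apply,
    ← algebraMap_smul S]
  exact (mem_torsionBySet_iff _ x).1 hx ⟨_, t.1, t.2, rfl⟩

lemma baseChange_torsionBySet_of_fg {I : Ideal R} (hI : I.FG) :
    (torsionBySet R M I).baseChange S = torsionBySet S (S ⊗[R] M) ↑(I.map (algebraMap R S)) := by
  obtain ⟨T, rfl⟩ := hI
  rw [← torsionBySet_eq_torsionBySet_span, Ideal.map_span, ← torsionBySet_eq_torsionBySet_span]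
  exact baseChange_torsionBySet T.finite_toSet

end Module.Flat

end BaseChange

lemma mem_smallTorsion_iff_exists_pow_mul {R M : Type*} [CommRing R] [AddCommGroup M]
    [Module R M] {a : Ideal R} {n : ℕ} (hn : 1 ≤ n) {x : M} :
    x ∈ smallTorsion a M ↔ ∃ k, x ∈ torsionBySet R M ↑(a ^ (n * k)) := by
  simp only [mem_torsionBySet_iff, Subtype.forall]
  constructor
  · rintro ⟨k, hk⟩
    exact ⟨k, fun r hr => hk r (Ideal.pow_le_pow_right (Nat.le_mul_of_pos_left k hn) hr)⟩
  · rintro ⟨k, hk⟩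
    exact ⟨n * k, hk⟩

/-- flat base change for small torsion when some power of `a` is finitely
generated: `Γ_{aS}(S ⊗_R M)` is the `S`-submodule generated by the `1 ⊗ m`,
`m ∈ Γ_a(M)`. -/
theorem stmt16 (R : Type*) [CommRing R] (a : Ideal R)
    (hfg : ∃ n : ℕ, 1 ≤ n ∧ (a ^ n).FG)
    (S : Type*) [CommRing S] [Algebra R S] [Module.Flat R S]
    (M : Type*) [AddCommGroup M] [Module R M] :
    smallTorsion (a.map (algebraMap R S)) (S ⊗[R] M) =
      Submodule.span S ((fun m : M => (1 : S) ⊗ₜ[R] m) '' (smallTorsion a M : Set M)) := by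
  obtain ⟨n, hn, hfg⟩ := hfg
  have baseChange_torsion_pow (k : ℕ) : (torsionBySet R M ↑(a ^ (n * k))).baseChange S =
      torsionBySet S (S ⊗[R] M) ↑(a.map (algebraMap R S) ^ (n * k)) := by
    rw [← Ideal.map_pow,
      Module.Flat.baseChange_torsionBySet_of_fg (pow_mul a n k ▸ Submodule.FG.pow hfg k)]
  rw [span_one_tmul_eq_baseChange]
  apply le_antisymm
  · intro x hx
    obtain ⟨k, hk⟩ := (mem_smallTorsion_iff_exists_pow_mul hn).1 hx
    rw [← baseChange_torsion_pow] at hk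
    exact baseChange_mono S (fun m hm => (mem_smallTorsion_iff_exists_pow_mul hn).2 ⟨k, hm⟩) hk
  · rw [← span_one_tmul_eq_baseChange, span_le]
    rintro _ ⟨m, hm, rfl⟩
    obtain ⟨k, hk⟩ := (mem_smallTorsion_iff_exists_pow_mul hn).1 hm
    refine (mem_smallTorsion_iff_exists_pow_mul hn).2 ⟨k, ?_⟩
    rw [← baseChange_torsion_pow]
    exact tmul_mem_baseChange_of_mem 1 hk
end

section
/- Let R be a commutative ring and a ⊆ R an ideal. Suppose that Γ_a preserves surjections, i.e. for every surjective morphism h : M → P of R-modules the induced map Γ_a(M) → Γ_a(P) is surjective. Then Γ_a is a radical (Γ_a(M/Γ_a(M)) = 0 for every R-module M) and R = Γ_a(R) + a. -/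
universe u

/-!
Apply the lifting property to two quotient maps. For `M → M/Γ_a(M)`, every torsion element
of the quotient is the image of an element of `Γ_a(M)`, hence zero. For `R → R/a`, the module
`R/a` is killed by `a`, so all of it is torsion; thus `Γ_a(R)` maps onto `R/a`, i.e.
`a ⊔ Γ_a(R) = ⊤`.
-/

theorem smallTorsion_eq_top_of_isTorsionBySet {R : Type*} [CommRing R] {a : Ideal R}
    {M : Type*} [AddCommGroup M] [Module R M] (h : Module.IsTorsionBySet R M a) :
    smallTorsion a M = ⊤ :=
  eq_top_iff.2 fun x _ => ⟨1, fun r hr => @h x ⟨r, by rwa [pow_one] at hr⟩⟩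

theorem smallTorsion_quotient_self_eq_top {R : Type*} [CommRing R] (a : Ideal R) :
    smallTorsion a (R ⧸ a) = ⊤ :=
  smallTorsion_eq_top_of_isTorsionBySet <|
    (Module.isTorsionBySet_quotient_iff a a).2 fun x _ hr => a.mul_mem_right x hr

/-- if `Γ_a` preserves surjections, then `Γ_a` is a radical and
`R = Γ_a(R) + a`. -/
theorem stmt18 (R : Type u) [CommRing R] (a : Ideal R)
    (hsurj : ∀ (M P : Type u) [AddCommGroup M] [Module R M] [AddCommGroup P] [Module R P]
      (h : M →ₗ[R] P), Function.Surjective h →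
        ∀ y ∈ smallTorsion a P, ∃ x ∈ smallTorsion a M, h x = y) :
    (∀ (M : Type u) [AddCommGroup M] [Module R M],
      smallTorsion a (M ⧸ smallTorsion a M) = ⊥) ∧
    smallTorsion a R ⊔ a = ⊤ := by
  refine ⟨fun M _ _ => eq_bot_iff.2 ?_, ?_⟩
  · calc smallTorsion a (M ⧸ smallTorsion a M)
        ≤ (smallTorsion a M).map (smallTorsion a M).mkQ :=
          hsurj _ _ _ (Submodule.mkQ_surjective _)
      _ = ⊥ := Submodule.mkQ_map_self _
  · rw [sup_comm, ← Submodule.map_mkQ_eq_top, eq_top_iff, ← smallTorsion_quotient_self_eq_top]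
    exact hsurj _ _ _ (Submodule.mkQ_surjective a)
end
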